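/- Let Q = (Q_L, Q_R) be a discrete policy and f ∈ ℝ^I. There exists a unique pair (U, Λ) ∈ ℝ^I × ℝ such that −ε(Δ♯U)_i + Q_{L,i}⁺ (D_L U)_i + Q_{R,i}⁻ (D_R U)_i + Λ = f_i for every index i and h·∑_i U_i = 0. Moreover Λ = (∑_i M_i f_i)/(∑_i M_i), where M is the unique solution of A(Q)M = 0 with h·∑_i M_i = 1; in particular |Λ| ≤ max_i |f_i|. -/
import Mathlib


open Matrix Filter Topology

noncomputable section

/-- Grid step `h = 1/I`. -/
def hh (I : ℕ) : ℝ := (I : ℝ)⁻¹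

/-- Discrete periodic Laplacian `(Δ♯U)_i = (U_{i-1} - 2U_i + U_{i+1})/h²`. -/
def lapD (I : ℕ) (U : ZMod I → ℝ) (i : ZMod I) : ℝ :=
  (U (i - 1) - 2 * U i + U (i + 1)) / hh I ^ 2

/-- Left discrete derivative `(D_L U)_i = (U_i - U_{i-1})/h`. -/
def DLd (I : ℕ) (U : ZMod I → ℝ) (i : ZMod I) : ℝ := (U i - U (i - 1)) / hh I

/-- Right discrete derivative `(D_R U)_i = (U_{i+1} - U_i)/h`. -/
def DRd (I : ℕ) (U : ZMod I → ℝ) (i : ZMod I) : ℝ := (U (i + 1) - U i) / hh I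

/-- Positive part `a⁺ = max(a,0)`. -/
def pp (a : ℝ) : ℝ := max a 0

/-- Negative part `a⁻ = min(a,0)`. -/
def np (a : ℝ) : ℝ := min a 0

/-- The discrete Fokker–Planck matrix `A(Q)` associated to a discrete policy
`Q = (Q_L, Q_R)`: `A(Q)_{i,i} = 2ε/h² + Q_{L,i}⁺/h − Q_{R,i}⁻/h`,
`A(Q)_{i,i−1} = −ε/h² + Q_{R,i−1}⁻/h`, `A(Q)_{i,i+1} = −ε/h² − Q_{L,i+1}⁺/h`,
all other entries zero (indices mod `I`). -/
def FPmat (I : ℕ) (ε : ℝ) (QL QR : ZMod I → ℝ) : Matrix (ZMod I) (ZMod I) ℝ :=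
  fun i j =>
    (if j = i then 2 * ε / hh I ^ 2 + pp (QL i) / hh I - np (QR i) / hh I else 0)
    + (if j = i - 1 then -ε / hh I ^ 2 + np (QR (i - 1)) / hh I else 0)
    + (if j = i + 1 then -ε / hh I ^ 2 - pp (QL (i + 1)) / hh I else 0)

end

noncomputable section St13Aux

variable {I : ℕ} [NeZero I]

lemma hh_pos : 0 < hh I := by
  have : (0:ℝ) < I := by exact_mod_cast Nat.pos_of_ne_zero (NeZero.ne I)
  simpa [hh] using inv_pos.mpr this

/-- The discrete HJ operator. -/
def Lop (I : ℕ) (ε : ℝ) (QL QR : ZMod I → ℝ) (U : ZMod I → ℝ) (i : ZMod I) : ℝ :=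
  -ε * lapD I U i + pp (QL i) * DLd I U i + np (QR i) * DRd I U i

lemma Lop_nonneg_at_max {ε : ℝ} (hε : 0 < ε) {QL QR U : ZMod I → ℝ} {i : ZMod I}
    (hmax : ∀ j, U j ≤ U i) : 0 ≤ Lop I ε QL QR U i := by
  have hp : 0 < hh I := hh_pos
  have hp2 : (0:ℝ) < hh I ^ 2 := by positivity
  have h1 : lapD I U i ≤ 0 := by
    unfold lapD
    apply div_nonpos_of_nonpos_of_nonneg _ hp2.le
    have := hmax (i - 1); have := hmax (i + 1); linarith
  have h2 : 0 ≤ DLd I U i := by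
    unfold DLd
    apply div_nonneg _ hp.le
    have := hmax (i - 1); linarith
  have h3 : DRd I U i ≤ 0 := by
    unfold DRd
    apply div_nonpos_of_nonpos_of_nonneg _ hp.le
    have := hmax (i + 1); linarith
  have hpp : 0 ≤ pp (QL i) := le_max_right _ _
  have hnp : np (QR i) ≤ 0 := min_le_right _ _
  have t1 : 0 ≤ -ε * lapD I U i := by nlinarith
  have t2 : 0 ≤ pp (QL i) * DLd I U i := mul_nonneg hpp h2
  have t3 : 0 ≤ np (QR i) * DRd I U i := by nlinarith
  unfold Lop; linarith

lemma Lop_nonpos_at_min {ε : ℝ} (hε : 0 < ε) {QL QR U : ZMod I → ℝ} {i : ZMod I}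
    (hmin : ∀ j, U i ≤ U j) : Lop I ε QL QR U i ≤ 0 := by
  have hp : 0 < hh I := hh_pos
  have hp2 : (0:ℝ) < hh I ^ 2 := by positivity
  have h1 : 0 ≤ lapD I U i := by
    unfold lapD
    apply div_nonneg _ hp2.le
    have := hmin (i - 1); have := hmin (i + 1); linarith
  have h2 : DLd I U i ≤ 0 := by
    unfold DLd
    apply div_nonpos_of_nonpos_of_nonneg _ hp.le
    have := hmin (i - 1); linarith
  have h3 : 0 ≤ DRd I U i := by
    unfold DRd
    apply div_nonneg _ hp.le
    have := hmin (i + 1); linarith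
  have hpp : 0 ≤ pp (QL i) := le_max_right _ _
  have hnp : np (QR i) ≤ 0 := min_le_right _ _
  have t1 : -ε * lapD I U i ≤ 0 := by nlinarith
  have t2 : pp (QL i) * DLd I U i ≤ 0 := mul_nonpos_of_nonneg_of_nonpos hpp h2
  have t3 : np (QR i) * DRd I U i ≤ 0 := mul_nonpos_of_nonpos_of_nonneg hnp h3
  unfold Lop; linarith

lemma max_step {ε : ℝ} (hε : 0 < ε) {QL QR U : ZMod I → ℝ} {i : ZMod I}
    (hmax : ∀ j, U j ≤ U i) (h0 : Lop I ε QL QR U i = 0) : U (i + 1) = U i := by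
  have hp : 0 < hh I := hh_pos
  have hp2 : (0:ℝ) < hh I ^ 2 := by positivity
  have h2 : 0 ≤ DLd I U i := by
    unfold DLd; apply div_nonneg _ hp.le; have := hmax (i - 1); linarith
  have h3 : DRd I U i ≤ 0 := by
    unfold DRd; apply div_nonpos_of_nonpos_of_nonneg _ hp.le
    have := hmax (i + 1); linarith
  have hpp : 0 ≤ pp (QL i) := le_max_right _ _
  have hnp : np (QR i) ≤ 0 := min_le_right _ _
  have t2 : 0 ≤ pp (QL i) * DLd I U i := mul_nonneg hpp h2
  have t3 : 0 ≤ np (QR i) * DRd I U i := by nlinarith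
  have t1 : -ε * lapD I U i ≤ 0 := by unfold Lop at h0; linarith
  have hlap : 0 ≤ lapD I U i := by
    by_contra h
    push_neg at h
    nlinarith
  have hnum : 0 ≤ U (i - 1) - 2 * U i + U (i + 1) := by
    have : U (i - 1) - 2 * U i + U (i + 1) = lapD I U i * hh I ^ 2 := by
      unfold lapD; field_simp
    rw [this]; exact mul_nonneg hlap hp2.le
  have := hmax (i - 1); have := hmax (i + 1); linarith

lemma const_of_Lop_zero {ε : ℝ} (hε : 0 < ε) {QL QR U : ZMod I → ℝ}
    (h0 : ∀ i, Lop I ε QL QR U i = 0) : ∀ j k : ZMod I, U j = U k := by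
  obtain ⟨i0, hi0⟩ := Finite.exists_max U
  suffices h : ∀ j, U j = U i0 by intro j k; rw [h j, h k]
  have step : ∀ n : ℕ, U (i0 + (n : ZMod I)) = U i0 := by
    intro n
    induction n with
    | zero => simp
    | succ n ih =>
      have hm : ∀ j, U j ≤ U (i0 + (n : ZMod I)) := fun j => ih ▸ hi0 j
      have := max_step hε hm (h0 (i0 + (n : ZMod I)))
      have hc : ((n + 1 : ℕ) : ZMod I) = (n : ZMod I) + 1 := by push_cast; ring
      rw [hc, ← add_assoc, this, ih]
  intro j
  obtain ⟨n, hn⟩ := ZMod.natCast_zmod_surjective (j - i0)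
  have : i0 + (n : ZMod I) = j := by rw [hn]; ring
  rw [← this, step n]

/-- The operator `Lop` is the transpose of the Fokker–Planck matrix. -/
lemma Lop_eq_sum (ε : ℝ) (QL QR U : ZMod I → ℝ) (i : ZMod I) :
    Lop I ε QL QR U i = ∑ j, FPmat I ε QL QR j i * U j := by
  have hne : hh I ≠ 0 := hh_pos.ne'
  have s1 : ∑ j : ZMod I,
      (if i = j then (2 * ε / hh I ^ 2 + pp (QL j) / hh I - np (QR j) / hh I) * U j else 0)
      = (2 * ε / hh I ^ 2 + pp (QL i) / hh I - np (QR i) / hh I) * U i := by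
    simp
  have s2 : ∑ j : ZMod I,
      (if i = j - 1 then (-ε / hh I ^ 2 + np (QR (j - 1)) / hh I) * U j else 0)
      = (-ε / hh I ^ 2 + np (QR i) / hh I) * U (i + 1) := by
    rw [Finset.sum_eq_single (i + 1)]
    · simp
    · intro j _ hj
      rw [if_neg]
      intro h
      exact hj (sub_eq_iff_eq_add.mp h.symm)
    · simp
  have s3 : ∑ j : ZMod I,
      (if i = j + 1 then (-ε / hh I ^ 2 - pp (QL (j + 1)) / hh I) * U j else 0)
      = (-ε / hh I ^ 2 - pp (QL i) / hh I) * U (i - 1) := by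
    rw [Finset.sum_eq_single (i - 1)]
    · simp
    · intro j _ hj
      rw [if_neg]
      intro h
      exact hj (eq_sub_of_add_eq h.symm)
    · simp
  have expand : ∀ j : ZMod I, FPmat I ε QL QR j i * U j =
      (if i = j then (2 * ε / hh I ^ 2 + pp (QL j) / hh I - np (QR j) / hh I) * U j else 0)
      + (if i = j - 1 then (-ε / hh I ^ 2 + np (QR (j - 1)) / hh I) * U j else 0)
      + (if i = j + 1 then (-ε / hh I ^ 2 - pp (QL (j + 1)) / hh I) * U j else 0) := by
    intro j
    unfold FPmat
    split_ifs <;> ring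
  symm
  calc ∑ j, FPmat I ε QL QR j i * U j
      = (2 * ε / hh I ^ 2 + pp (QL i) / hh I - np (QR i) / hh I) * U i
        + ((-ε / hh I ^ 2 + np (QR i) / hh I) * U (i + 1)
        + (-ε / hh I ^ 2 - pp (QL i) / hh I) * U (i - 1)) := by
        rw [Finset.sum_congr rfl (fun j _ => expand j), Finset.sum_add_distrib,
          Finset.sum_add_distrib, s1, s2, s3]
        ring
    _ = Lop I ε QL QR U i := by
        unfold Lop lapD DLd DRd
        field_simp
        ring

end St13Aux

noncomputable section St13Aux2

variable {I : ℕ} [NeZero I]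

/-- The linear map `(U, Λ) ↦ (Lop U + Λ, h ∑ U)`. -/
def Tmap (I : ℕ) [NeZero I] (ε : ℝ) (QL QR : ZMod I → ℝ) :
    ((ZMod I → ℝ) × ℝ) →ₗ[ℝ] ((ZMod I → ℝ) × ℝ) where
  toFun p := (fun i => Lop I ε QL QR p.1 i + p.2, hh I * ∑ i, p.1 i)
  map_add' p q := by
    refine Prod.ext (funext fun i => ?_) ?_
    · simp only [Lop, lapD, DLd, DRd, Prod.fst_add, Prod.snd_add, Pi.add_apply]
      ring
    · simp only [Prod.fst_add, Prod.snd_add, Pi.add_apply, Finset.sum_add_distrib]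
      ring
  map_smul' c p := by
    refine Prod.ext (funext fun i => ?_) ?_
    · simp only [Lop, lapD, DLd, DRd, Prod.smul_fst, Prod.smul_snd, Pi.smul_apply,
        smul_eq_mul, RingHom.id_apply]
      ring
    · simp only [Prod.smul_fst, Prod.smul_snd, Pi.smul_apply, smul_eq_mul,
        RingHom.id_apply, Finset.mul_sum]
      exact Finset.sum_congr rfl fun i _ => by ring

lemma Tmap_inj {ε : ℝ} (hε : 0 < ε) (QL QR : ZMod I → ℝ) :
    Function.Injective (Tmap I ε QL QR) := by
  rw [← LinearMap.ker_eq_bot, LinearMap.ker_eq_bot']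
  rintro ⟨U, Λ⟩ hp
  have hp1 : ∀ i, Lop I ε QL QR U i + Λ = 0 := fun i =>
    congrFun (congrArg Prod.fst hp) i
  have hp2 : hh I * ∑ i, U i = 0 := congrArg Prod.snd hp
  obtain ⟨imax, hmax⟩ := Finite.exists_max U
  obtain ⟨imin, hmin⟩ := Finite.exists_min U
  have l1 : Λ ≤ 0 := by
    have := Lop_nonneg_at_max (QL := QL) (QR := QR) hε hmax
    linarith [hp1 imax]
  have l2 : 0 ≤ Λ := by
    have := Lop_nonpos_at_min (QL := QL) (QR := QR) hε hmin
    linarith [hp1 imin]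
  have hΛ : Λ = 0 := le_antisymm l1 l2
  have h0 : ∀ i, Lop I ε QL QR U i = 0 := by
    intro i; have := hp1 i; linarith
  have hconst := const_of_Lop_zero hε h0
  have hsum : ∑ i, U i = (I : ℝ) * U imax := by
    rw [Finset.sum_congr rfl (fun j _ => hconst j imax)]
    simp [ZMod.card]
  have hIne : (I : ℝ) ≠ 0 := by exact_mod_cast NeZero.ne I
  have hUmax : U imax = 0 := by
    rw [hsum] at hp2
    have hhne : hh I ≠ 0 := (hh_pos (I := I)).ne'
    rcases mul_eq_zero.mp hp2 with h | h
    · exact absurd h hhne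
    · rcases mul_eq_zero.mp h with h' | h'
      · exact absurd h' hIne
      · exact h'
  refine Prod.ext (funext fun i => ?_) hΛ
  show U i = 0
  rw [hconst i imax, hUmax]

end St13Aux2

/-- the discrete ergodic HJ problem
`−ε(Δ♯U)_i + Q_{L,i}⁺(D_L U)_i + Q_{R,i}⁻(D_R U)_i + Λ = f_i`, `h·∑_i U_i = 0`
has a unique solution `(U,Λ)`; moreover `Λ = (∑_i M_i f_i)/(∑_i M_i)` where `M` is the
solution of `A(Q)M = 0` with `h·∑_i M_i = 1`, and `|Λ| ≤ max_i |f_i|`. -/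
theorem statement_13 (I : ℕ) [NeZero I] (hI : 3 ≤ I) (ε : ℝ) (hε : 0 < ε)
    (QL QR f : ZMod I → ℝ) :
    (∃! UΛ : (ZMod I → ℝ) × ℝ,
      (∀ i, -ε * lapD I UΛ.1 i + pp (QL i) * DLd I UΛ.1 i + np (QR i) * DRd I UΛ.1 i
          + UΛ.2 = f i) ∧
      hh I * ∑ i, UΛ.1 i = 0) ∧
    (∀ (U : ZMod I → ℝ) (Λ : ℝ),
      (∀ i, -ε * lapD I U i + pp (QL i) * DLd I U i + np (QR i) * DRd I U i + Λ = f i) →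
      hh I * ∑ i, U i = 0 →
      ∀ M : ZMod I → ℝ,
        (FPmat I ε QL QR).mulVec M = 0 → hh I * ∑ i, M i = 1 →
        Λ = (∑ i, M i * f i) / (∑ i, M i) ∧
        |Λ| ≤ Finset.univ.sup' Finset.univ_nonempty fun i => |f i|) := by
  constructor
  · -- existence and uniqueness
    have hinj := Tmap_inj (I := I) hε QL QR
    have hsurj : Function.Surjective (Tmap I ε QL QR) :=
      LinearMap.injective_iff_surjective.mp hinj
    obtain ⟨⟨U, Λ⟩, hU⟩ := hsurj (f, 0)
    have hU1 : ∀ i, Lop I ε QL QR U i + Λ = f i := fun i =>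
      congrFun (congrArg Prod.fst hU) i
    have hU2 : hh I * ∑ i, U i = 0 := congrArg Prod.snd hU
    refine ⟨(U, Λ), ⟨fun i => hU1 i, hU2⟩, ?_⟩
    rintro ⟨V, Μ⟩ ⟨hV1, hV2⟩
    apply hinj
    rw [hU]
    exact Prod.ext (funext fun i => hV1 i) hV2
  · -- representation formula and bound
    intro U Λ hUeq hUsum M hM0 hM1
    have heq : ∀ i, Lop I ε QL QR U i + Λ = f i := fun i => hUeq i
    have hMne : ∑ i, M i ≠ 0 := by
      intro h0
      rw [h0, mul_zero] at hM1
      exact zero_ne_one hM1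
    constructor
    · -- Λ = ∑ M f / ∑ M
      have key : ∑ i, M i * Lop I ε QL QR U i = 0 := by
        have e1 : ∀ i : ZMod I, M i * Lop I ε QL QR U i
            = ∑ j, M i * (FPmat I ε QL QR j i * U j) := by
          intro i; rw [Lop_eq_sum, Finset.mul_sum]
        rw [Finset.sum_congr rfl (fun i _ => e1 i), Finset.sum_comm]
        have e2 : ∀ j : ZMod I, ∑ i, M i * (FPmat I ε QL QR j i * U j)
            = (FPmat I ε QL QR).mulVec M j * U j := by
          intro j
          rw [Matrix.mulVec, dotProduct, Finset.sum_mul]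
          exact Finset.sum_congr rfl fun i _ => by ring
        rw [Finset.sum_congr rfl (fun j _ => e2 j)]
        simp [hM0]
      have hMf : ∑ i, M i * f i = Λ * ∑ i, M i := by
        calc ∑ i, M i * f i = ∑ i, (M i * Lop I ε QL QR U i + M i * Λ) :=
              Finset.sum_congr rfl fun i _ => by rw [← heq i]; ring
          _ = (∑ i, M i * Lop I ε QL QR U i) + (∑ i, M i) * Λ := by
              rw [Finset.sum_add_distrib, ← Finset.sum_mul]
          _ = Λ * ∑ i, M i := by rw [key]; ring
      rw [hMf]
      rw [mul_div_assoc, div_self hMne, mul_one]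
    · -- |Λ| ≤ max |f|
      set S := Finset.univ.sup' Finset.univ_nonempty fun i => |f i| with hS
      obtain ⟨imax, hmax⟩ := Finite.exists_max U
      obtain ⟨imin, hmin⟩ := Finite.exists_min U
      have b1 : Λ ≤ f imax := by
        have := Lop_nonneg_at_max (QL := QL) (QR := QR) hε hmax
        linarith [heq imax]
      have b2 : f imin ≤ Λ := by
        have := Lop_nonpos_at_min (QL := QL) (QR := QR) hε hmin
        linarith [heq imin]
      have s1 : |f imax| ≤ S := by rw [hS]; exact Finset.le_sup' (fun i => |f i|) (Finset.mem_univ imax)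
      have s2 : |f imin| ≤ S := by rw [hS]; exact Finset.le_sup' (fun i => |f i|) (Finset.mem_univ imin)
      rw [abs_le]
      constructor
      · linarith [neg_abs_le (f imin)]
      · linarith [le_abs_self (f imax)]
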